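/- If a family (q_{ij})_{i,j ∈ ℤ/Nℤ} in A satisfies the anyonic permutation relations, then the twisted conjugate matrix q̄_R with entries (q̄_R)_{ij} = ω^{-i(j-i)} q_{ij}* is unitary over A; explicitly, for all i,j ∈ ℤ/Nℤ: ∑_{k ∈ ℤ/Nℤ} ω^{k(i-j)} q_{ki} q_{kj}* = δ_{ij}·1 and ∑_{k ∈ ℤ/Nℤ} ω^{i(i-k)+j(k-j)} q_{ik}* q_{jk} = δ_{ij}·1. -/

import Mathlib

noncomputable section

/-- `ω ^ m` for `m ∈ ℤ/Nℤ`; this is well defined (independent of the chosen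
representative) as soon as `ω ^ N = 1`. -/
def wpow (N : ℕ) (ω : ℂ) (m : ZMod N) : ℂ := ω ^ m.val

/-- `z ^ m` for `m ∈ ℤ/Nℤ`; well defined when `z ^ N = 1`. -/
def apow {A : Type*} [Monoid A] (N : ℕ) (z : A) (m : ZMod N) : A := z ^ m.val

/-- The anyonic permutation relations for a family `(q i j)` indexed by `ℤ/Nℤ × ℤ/Nℤ`. -/
def AnyonicPermRel (N : ℕ) [NeZero N] (ω : ℂ) {A : Type*} [Ring A] [StarRing A]
    [Algebra ℂ A] (q : ZMod N → ZMod N → A) : Prop :=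
  (∀ i : ZMod N, q 0 i = if i = 0 then 1 else 0) ∧
  (∀ i : ZMod N, q i 0 = if i = 0 then 1 else 0) ∧
  (∀ i j : ZMod N, star (q i j) = wpow N ω (-(i * (i - j))) • q (-i) (-j)) ∧
  (∀ i j k : ZMod N, q k (i + j) =
    ∑ l : ZMod N, wpow N ω (-(l * (i - k + l))) • (q (k - l) i * q l j)) ∧
  (∀ i j k : ZMod N, q (i + j) k =
    ∑ l : ZMod N, wpow N ω (-(i * (l - j))) • (q j l * q i (k - l)))

/-- The untwisted relations for a family `(a i j)` indexed by `ℤ/Nℤ × ℤ/Nℤ`. -/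
def UntwistedRel (N : ℕ) [NeZero N] {A : Type*} [Ring A] [StarRing A]
    (a : ZMod N → ZMod N → A) : Prop :=
  (∀ i : ZMod N, a i 0 = if i = 0 then 1 else 0) ∧
  (∀ i j : ZMod N, star (a i j) = a (-i) (-j)) ∧
  (∀ i j k : ZMod N, ∑ l : ZMod N, a (k - l) i * a l j = a k (i + j)) ∧
  (∀ i j k : ZMod N, ∑ l : ZMod N, a j l * a i (k - l) = a (i + j) k)

/-- A matrix `(m i j)` over a unital `*`-algebra is unitary. -/
def IsUnitaryMatrix (N : ℕ) [NeZero N] {A : Type*} [Ring A] [StarRing A]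
    (m : ZMod N → ZMod N → A) : Prop :=
  (∀ i j : ZMod N, ∑ k : ZMod N, star (m k i) * m k j = if i = j then 1 else 0) ∧
  (∀ i j : ZMod N, ∑ k : ZMod N, m i k * star (m j k) = if i = j then 1 else 0)

/-- The twisted conjugate matrix `ū_R` with entries `ω^{-i(j-i)} u_{ij}*`. -/
def conjR (N : ℕ) (ω : ℂ) {A : Type*} [Ring A] [StarRing A] [Algebra ℂ A]
    (u : ZMod N → ZMod N → A) : ZMod N → ZMod N → A :=
  fun i j => wpow N ω (-(i * (j - i))) • star (u i j)

/-- A magic unitary: entries are projections and all rows and columns sum to `1`. -/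
def IsMagicUnitary (N : ℕ) [NeZero N] {A : Type*} [Ring A] [StarRing A]
    (u : ZMod N → ZMod N → A) : Prop :=
  (∀ i j : ZMod N, u i j * u i j = u i j) ∧
  (∀ i j : ZMod N, star (u i j) = u i j) ∧
  (∀ j : ZMod N, ∑ i : ZMod N, u i j = 1) ∧
  (∀ i : ZMod N, ∑ j : ZMod N, u i j = 1)

/-!
Relation (2) identifies `q (-i) (-j)` with `q i j *` up to a power of `ω`. Taking `k = 0` in (4),
where (1) makes the left side `δ_{i+j,0}`, and substituting (2) into the second factor gives the
orthogonality of the rows of `q` against their adjoints; taking `k = 0` in (3) gives the twisted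
column relation in the same way. The rows of `q̄_R` are, up to phases, adjoints of rows of
`q (-·) (-·)`, so both unitarity relations of `q̄_R` reduce to these two identities.
-/

lemma wpow_zero (N : ℕ) (ω : ℂ) : wpow N ω 0 = 1 := by
  simp [wpow]

section wpow

variable {N : ℕ} [NeZero N] {ω : ℂ}

lemma wpow_add (hω : ω ^ N = 1) (a b : ZMod N) :
    wpow N ω (a + b) = wpow N ω a * wpow N ω b := by
  rw [wpow, wpow, wpow, ← pow_add, ZMod.val_add, ← pow_eq_pow_mod _ hω]

lemma wpow_neg_mul_wpow (hω : ω ^ N = 1) (a : ZMod N) :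
    wpow N ω (-a) * wpow N ω a = 1 := by
  rw [← wpow_add hω, neg_add_cancel, wpow_zero]

lemma star_wpow (hω : ω ^ N = 1) (a : ZMod N) : star (wpow N ω a) = wpow N ω (-a) := by
  have hnorm : ‖wpow N ω a‖ = 1 :=
    Complex.norm_eq_one_of_pow_eq_one
      (by rw [wpow, ← pow_mul, mul_comm, pow_mul, hω, one_pow]) (NeZero.ne N)
  exact (Complex.inv_eq_conj hnorm).symm.trans
    (inv_eq_of_mul_eq_one_left (wpow_neg_mul_wpow hω a))

lemma wpow_smul_wpow_smul {A : Type*} [AddCommMonoid A] [Module ℂ A] (hω : ω ^ N = 1)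
    (a b : ZMod N) (x : A) : wpow N ω a • wpow N ω b • x = wpow N ω (a + b) • x := by
  rw [smul_smul, wpow_add hω]

end wpow

section conjR

variable {N : ℕ} [NeZero N] {ω : ℂ} {A : Type*} [Ring A] [StarRing A] [Algebra ℂ A]
  [StarModule ℂ A]

lemma star_conjR_mul_conjR (hω : ω ^ N = 1) (u : ZMod N → ZMod N → A) (i j k : ZMod N) :
    star (conjR N ω u k i) * conjR N ω u k j =
      wpow N ω (k * (i - j)) • (u k i * star (u k j)) := by
  rw [conjR, conjR, star_smul, star_star, star_wpow hω, neg_neg, smul_mul_smul_comm,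
    ← wpow_add hω]
  ring_nf

lemma conjR_mul_star_conjR (hω : ω ^ N = 1) (u : ZMod N → ZMod N → A) (i j k : ZMod N) :
    conjR N ω u i k * star (conjR N ω u j k) =
      wpow N ω (i * (i - k) + j * (k - j)) • (star (u i k) * u j k) := by
  rw [conjR, conjR, star_smul, star_star, star_wpow hω, neg_neg, smul_mul_smul_comm,
    ← wpow_add hω]
  ring_nf

end conjR

namespace AnyonicPermRel

variable {N : ℕ} [NeZero N] {ω : ℂ} {A : Type*} [Ring A] [StarRing A] [Algebra ℂ A]
  {q : ZMod N → ZMod N → A}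

lemma apply_neg_neg (hω : ω ^ N = 1) (hq : AnyonicPermRel N ω q) (i j : ZMod N) :
    q (-i) (-j) = wpow N ω (i * (i - j)) • star (q i j) := by
  rw [hq.2.2.1, wpow_smul_wpow_smul hω, add_neg_cancel, wpow_zero, one_smul]

lemma eq_smul_star_neg_neg (hω : ω ^ N = 1) (hq : AnyonicPermRel N ω q) (i j : ZMod N) :
    q i j = wpow N ω (i * (i - j)) • star (q (-i) (-j)) := by
  conv_lhs => rw [← neg_neg i, ← neg_neg j, hq.apply_neg_neg hω]
  ring_nf

lemma sum_mul_star (hω : ω ^ N = 1) (hq : AnyonicPermRel N ω q) (i j : ZMod N) :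
    ∑ l, q j l * star (q i l) = if i = j then 1 else 0 := by
  have hsum := hq.2.2.2.2 (-i) j 0
  simp only [hq.2.1, neg_add_eq_zero] at hsum
  have hterm : ∀ l, wpow N ω (-(-i * (l - j))) • (q j l * q (-i) (0 - l)) =
      wpow N ω (i * (i - j)) • (q j l * star (q i l)) := by
    intro l
    rw [zero_sub, hq.apply_neg_neg hω, mul_smul_comm, wpow_smul_wpow_smul hω]
    ring_nf
  rw [Finset.sum_congr rfl fun l _ => hterm l, ← Finset.smul_sum] at hsum
  split_ifs at hsum ⊢ with hij
  · subst hij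
    simpa [wpow_zero] using hsum.symm
  · simpa [wpow_smul_wpow_smul hω, wpow_zero] using
      congrArg (wpow N ω (-(i * (i - j))) • ·) hsum.symm

lemma sum_wpow_smul_mul_star (hω : ω ^ N = 1) (hq : AnyonicPermRel N ω q) (i j : ZMod N) :
    ∑ k, wpow N ω (k * (i - j)) • (q k i * star (q k j)) = if i = j then 1 else 0 := by
  have hsum := hq.2.2.2.1 i (-j) 0
  simp only [hq.1, add_neg_eq_zero] at hsum
  rw [hsum]
  refine Fintype.sum_equiv (Equiv.neg _) _ _ fun k => ?_
  rw [Equiv.neg_apply, zero_sub, neg_neg, hq.apply_neg_neg hω k j, mul_smul_comm,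
    wpow_smul_wpow_smul hω]
  ring_nf

lemma sum_wpow_smul_star_mul (hω : ω ^ N = 1) (hq : AnyonicPermRel N ω q) (i j : ZMod N) :
    ∑ k, wpow N ω (i * (i - k) + j * (k - j)) • (star (q i k) * q j k) =
      if i = j then 1 else 0 := by
  rw [show (if i = j then (1 : A) else 0) = if -j = -i then 1 else 0 by simp [eq_comm],
    ← hq.sum_mul_star hω (-j) (-i)]
  refine Fintype.sum_equiv (Equiv.neg _) _ _ fun k => ?_
  rw [Equiv.neg_apply, hq.2.2.1 i k, hq.eq_smul_star_neg_neg hω j k, smul_mul_smul_comm,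
    ← wpow_add hω, wpow_smul_wpow_smul hω]
  ring_nf
  rw [wpow_zero, one_smul]

end AnyonicPermRel

theorem stmt_3_general (N : ℕ) [NeZero N] (ω : ℂ) (hω : IsPrimitiveRoot ω N)
    {A : Type*} [NormedRing A] [StarRing A]
    [NormedAlgebra ℂ A] [StarModule ℂ A]
    (q : ZMod N → ZMod N → A) (hq : AnyonicPermRel N ω q) :
    IsUnitaryMatrix N (conjR N ω q) ∧
    (∀ i j : ZMod N,
      ∑ k : ZMod N, wpow N ω (k * (i - j)) • (q k i * star (q k j)) =
        if i = j then 1 else 0) ∧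
    (∀ i j : ZMod N,
      ∑ k : ZMod N, wpow N ω (i * (i - k) + j * (k - j)) • (star (q i k) * q j k) =
        if i = j then 1 else 0) := by
  have h1 : ω ^ N = 1 := hω.pow_eq_one
  have hcols := hq.sum_wpow_smul_mul_star h1
  have hrows := hq.sum_wpow_smul_star_mul h1
  refine ⟨⟨fun i j => ?_, fun i j => ?_⟩, hcols, hrows⟩
  · simpa only [star_conjR_mul_conjR h1] using hcols i j
  · simpa only [conjR_mul_star_conjR h1] using hrows i j

theorem stmt_3 (N : ℕ) [NeZero N] (hN : 2 ≤ N) (ω : ℂ) (hω : IsPrimitiveRoot ω N)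
    {A : Type*} [NormedRing A] [StarRing A] [CStarRing A]
    [NormedAlgebra ℂ A] [CompleteSpace A] [StarModule ℂ A]
    (q : ZMod N → ZMod N → A) (hq : AnyonicPermRel N ω q) :
    IsUnitaryMatrix N (conjR N ω q) ∧
    (∀ i j : ZMod N,
      ∑ k : ZMod N, wpow N ω (k * (i - j)) • (q k i * star (q k j)) =
        if i = j then 1 else 0) ∧
    (∀ i j : ZMod N,
      ∑ k : ZMod N, wpow N ω (i * (i - k) + j * (k - j)) • (star (q i k) * q j k) =
        if i = j then 1 else 0) :=
  stmt_3_general N ω hω q hq
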